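/- arXiv:0812.2114 — 3 statements merged into one kernel-verified Lean document; each statement's English description precedes it below -/
import Mathlib

section
/- For n ∈ {3, 4, 6}, every nontrivial normal subgroup of the group Gₙ = ℤ² ⋊ ℤₙ has finite index in Gₙ. -/
/-!
The translations `z ↦ z + μ`, `μ ∈ Λ`, form the kernel of the linear-part homomorphism on `G`,
whose image consists of the finitely many multiplications by `ζ ^ k`; so they form a subgroup
`T ≅ Λ` of finite index, and it suffices that `M = N ∩ T`, viewed as a subgroup of `Λ`, has
finite index in `Λ`. Take `g ∈ N`, `g ≠ 1`, with linear part `ζ ^ k`. If `ζ ^ k = 1`, `g` is a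
nonzero element of `M`; otherwise the commutator of `g` with the translation by `a` is the
translation by `(1 - ζ ^ k) a ≠ 0`. Conjugating by the rotation `z ↦ ζ z` shows `ζ M ⊆ M`, so
`M` contains some `ν ≠ 0` together with `ζ ν`; these are independent because `ζ ∉ ℝ` (this is
where `n ≥ 3` enters). Hence `M` has rank `2 ≥ rank Λ`, and `Λ ⧸ M` is a finitely generated
torsion group, hence finite.
-/

namespace AffineEquiv

variable {k V P : Type*} [Ring k] [AddCommGroup V] [Module k V] [AddTorsor V P]

theorem mul_constVAdd_mul_inv (g : P ≃ᵃ[k] P) (v : V) :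
    g * constVAdd k P v * g⁻¹ = constVAdd k P (g.linear v) := by
  ext p
  simp [mul_def, inv_def, map_vadd]

theorem ker_linearHom :
    (linearHom : (P ≃ᵃ[k] P) →* V ≃ₗ[k] V).ker = (constVAddHom k P).range := by
  ext g
  refine ⟨fun hg => ?_, ?_⟩
  · obtain ⟨p₀⟩ := AddTorsor.nonempty (G := V) (P := P)
    refine ⟨Multiplicative.ofAdd (g p₀ -ᵥ p₀), ext fun p => ?_⟩
    have hlin : g.linear = LinearEquiv.refl k V := hg
    calc (g p₀ -ᵥ p₀) +ᵥ p = g.linear (p -ᵥ p₀) +ᵥ g p₀ := by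
          rw [hlin, LinearEquiv.refl_apply, vsub_vadd_comm]
      _ = g p := by rw [← map_vadd, vsub_vadd]
  · rintro ⟨v, rfl⟩
    rfl

theorem linear_apply_eq_mul {R : Type*} [Ring R] [Module k R] {f : R ≃ᵃ[k] R} {w c : R}
    (hf : ∀ z, f z = w * z + c) (v : R) : f.linear v = w * v := by
  simpa [hf] using f.toAffineMap.linearMap_vsub v 0

section Translations

variable {Λ : AddSubgroup V} {G : Subgroup (P ≃ᵃ[k] P)}

def translationHom (hΛ : ∀ v, constVAdd k P v ∈ G ↔ v ∈ Λ) : Multiplicative Λ →* G :=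
  ((constVAddHom k P).comp Λ.subtype.toMultiplicative).codRestrict G
    fun μ => (hΛ _).2 μ.toAdd.2

variable (hΛ : ∀ v, constVAdd k P v ∈ G ↔ v ∈ Λ)

theorem range_translationHom :
    (translationHom hΛ).range = (linearHom.comp G.subtype).ker := by
  ext g
  rw [MonoidHom.mem_ker, MonoidHom.comp_apply, ← MonoidHom.mem_ker, ker_linearHom]
  refine ⟨fun ⟨μ, hμ⟩ => ⟨_, congrArg Subtype.val hμ⟩, fun ⟨v, hv⟩ => ?_⟩
  have hvΛ : v.toAdd ∈ Λ := (hΛ _).1 (by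
    change constVAddHom k P v ∈ G
    exact hv ▸ g.2)
  exact ⟨Multiplicative.ofAdd ⟨v.toAdd, hvΛ⟩, Subtype.ext hv⟩

theorem linear_apply_mem (hΛ : ∀ v, constVAdd k P v ∈ G ↔ v ∈ Λ) {g : P ≃ᵃ[k] P} (hg : g ∈ G)
    {v : V} (hv : v ∈ Λ) : g.linear v ∈ Λ := by
  rw [← hΛ, ← mul_constVAdd_mul_inv]
  exact mul_mem (mul_mem hg ((hΛ v).2 hv)) (inv_mem hg)

theorem conj_translationHom (g : G) (μ : Multiplicative Λ) :
    g * translationHom hΛ μ * g⁻¹ =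
      translationHom hΛ (Multiplicative.ofAdd ⟨(g : P ≃ᵃ[k] P).linear μ.toAdd,
        linear_apply_mem hΛ g.2 μ.toAdd.2⟩) :=
  Subtype.ext (mul_constVAdd_mul_inv _ _)

/-- The commutator of `g` with the translation by `v` is the translation by `v - g.linear v`. -/
theorem comap_translationHom_ne_bot_of_linear_apply_ne {N : Subgroup G} (hN : N.Normal) {g : G}
    (hg : g ∈ N) {v : V} (hv : v ∈ Λ) (hgv : (g : P ≃ᵃ[k] P).linear v ≠ v) :
    N.comap (translationHom hΛ) ≠ ⊥ := by
  set μ : Multiplicative Λ := Multiplicative.ofAdd ⟨v, hv⟩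
  have hcomm : translationHom hΛ μ * (g * translationHom hΛ μ⁻¹ * g⁻¹) ∈ N := by
    simpa only [map_inv, mul_assoc] using
      mul_mem (hN.conj_mem g hg (translationHom hΛ μ)) (inv_mem hg)
  rw [conj_translationHom, ← map_mul] at hcomm
  intro hbot
  have h1 := congrArg (fun x : Multiplicative Λ => (x.toAdd : V))
    (Subgroup.mem_bot.1 (hbot ▸ Subgroup.mem_comap.2 hcomm))
  simp only [μ, toAdd_mul, toAdd_ofAdd, toAdd_inv, AddSubgroup.coe_add, AddSubgroup.coe_neg,
    map_neg, toAdd_one, ZeroMemClass.coe_zero] at h1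
  exact hgv (add_neg_eq_zero.1 h1).symm

end Translations

end AffineEquiv

theorem Subgroup.finiteIndex_of_comap {A G : Type*} [Group A] [Group G] (f : A →* G)
    (N : Subgroup G) [f.range.FiniteIndex] [(N.comap f).FiniteIndex] : N.FiniteIndex := by
  refine ⟨relIndex_top_right N ▸ relIndex_ne_zero_trans (K := f.range) ?_ ?_⟩
  · exact index_comap N f ▸ FiniteIndex.index_ne_zero
  · exact (relIndex_top_right f.range).symm ▸ FiniteIndex.index_ne_zero

namespace AddSubgroup

variable {V : Type*} [AddCommGroup V]

theorem finiteIndex_of_rank_le [Module.Finite ℤ V] (M : AddSubgroup V)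
    (h : Module.rank ℤ V ≤ Module.rank ℤ M) : M.FiniteIndex := by
  have hsum := rank_quotient_add_rank_of_isDomain M.toIntSubmodule
  have hM : Module.rank ℤ M.toIntSubmodule = Module.rank ℤ V :=
    le_antisymm (hsum ▸ le_add_self) h
  have hzero : Module.rank ℤ (V ⧸ M.toIntSubmodule) = 0 := by
    refine Cardinal.eq_of_add_eq_add_right (b := Module.rank ℤ M.toIntSubmodule) ?_ ?_
    · rw [hsum, hM, zero_add]
    · exact hM ▸ Module.rank_lt_aleph0 ℤ V
  have : Finite (V ⧸ M.toIntSubmodule) :=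
    Module.finite_of_fg_torsion _ (Module.rank_eq_zero_iff_isTorsion.mp hzero)
  exact @finiteIndex_of_finite_quotient _ _ M this

theorem rank_closure_pair_le (a b : V) : Module.rank ℤ (closure {a, b}) ≤ 2 := by
  have h := rank_span_le (R := ℤ) ({a, b} : Set V)
  rw [← toIntSubmodule_closure] at h
  exact h.trans (by exact_mod_cast Cardinal.mk_insert_le.trans (by rw [Cardinal.mk_singleton]; norm_num))

instance moduleFinite_closure_pair (a b : V) : Module.Finite ℤ (closure {a, b}) := by
  have := Module.Finite.span_of_finite ℤ (Set.toFinite ({a, b} : Set V))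
  rwa [← toIntSubmodule_closure] at this

end AddSubgroup

namespace Complex

theorem linearIndependent_int_pair_mul {ν ζ : ℂ} (hν : ν ≠ 0) (hζ : ζ.im ≠ 0) :
    LinearIndependent ℤ ![ν, ζ * ν] := by
  refine LinearIndependent.pair_iff.2 fun s t hst => ?_
  have hfactor : ((s : ℂ) + t * ζ) * ν = 0 := by
    rw [← hst, zsmul_eq_mul, zsmul_eq_mul]; ring
  have hcoef := (mul_eq_zero.1 hfactor).resolve_right hν
  have ht : t = 0 := by
    have him := congrArg im hcoef
    simp only [add_im, intCast_im, mul_im, intCast_re, zero_mul, zero_add, add_zero,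
      zero_im] at him
    exact_mod_cast (mul_eq_zero.1 him).resolve_right hζ
  subst ht
  simpa using hcoef

theorem im_exp_two_pi_mul_I_div_ne_zero {n : ℕ} (hn : 2 < n) :
    (exp (2 * Real.pi * I / n)).im ≠ 0 := by
  have hform : 2 * Real.pi * I / n = ((2 * Real.pi / n : ℝ) : ℂ) * I := by
    push_cast; ring
  rw [hform, exp_ofReal_mul_I_im]
  refine (Real.sin_pos_of_pos_of_lt_pi (by positivity) ?_).ne'
  rw [div_lt_iff₀ (by positivity)]
  have : (2 : ℝ) < n := by exact_mod_cast hn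
  nlinarith [Real.pi_pos]

end Complex

open AffineEquiv

def IsRotationTranslationGroup (ζ : ℂ) (Λ : AddSubgroup ℂ) (G : Subgroup (ℂ ≃ᵃ[ℝ] ℂ)) : Prop :=
  ∀ f : ℂ ≃ᵃ[ℝ] ℂ, f ∈ G ↔ ∃ (k : ℤ) (lam : ℂ), lam ∈ Λ ∧ ∀ z : ℂ, f z = ζ ^ k * z + lam

namespace IsRotationTranslationGroup

variable {ζ : ℂ} {Λ : AddSubgroup ℂ} {G : Subgroup (ℂ ≃ᵃ[ℝ] ℂ)}

theorem constVAdd_mem_iff (hG : IsRotationTranslationGroup ζ Λ G) (μ : ℂ) :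
    constVAdd ℝ ℂ μ ∈ G ↔ μ ∈ Λ := by
  refine ⟨fun h => ?_, fun h => (hG _).2 ⟨0, μ, h, fun z => by simp [add_comm]⟩⟩
  obtain ⟨k, lam, hlam, hf⟩ := (hG _).1 h
  have h0 := hf 0
  simp only [constVAdd_apply, vadd_eq_add, add_zero, mul_zero, zero_add] at h0
  exact h0 ▸ hlam

theorem exists_linear_apply_eq_zpow_mul (hG : IsRotationTranslationGroup ζ Λ G)
    {f : ℂ ≃ᵃ[ℝ] ℂ} (hf : f ∈ G) : ∃ k : ℤ, ∀ v, f.linear v = ζ ^ k * v := by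
  obtain ⟨k, lam, -, hk⟩ := (hG f).1 hf
  exact ⟨k, linear_apply_eq_mul hk⟩

theorem exists_mem_linear_apply_eq_mul (hG : IsRotationTranslationGroup ζ Λ G) (hζ : ζ ≠ 0) :
    ∃ r ∈ G, ∀ v, r.linear v = ζ * v := by
  set r := (DistribMulAction.toLinearEquiv ℝ ℂ (Units.mk0 ζ hζ)).toAffineEquiv
  exact ⟨r, (hG r).2 ⟨1, 0, zero_mem Λ, fun z => by simp [r]⟩, fun v => rfl⟩

/-- A linear part `z ↦ ζ ^ k * z` is determined by its value at `1`, an `n`-th root of unity. -/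
theorem finite_range_linearHom (hG : IsRotationTranslationGroup ζ Λ G) {n : ℕ} (hn : n ≠ 0)
    (hζ : ζ ^ n = 1) : Finite (linearHom.comp G.subtype).range := by
  have hinj : Set.InjOn (fun L : ℂ ≃ₗ[ℝ] ℂ => L 1) (linearHom.comp G.subtype).range := by
    rintro _ ⟨f, rfl⟩ _ ⟨g, rfl⟩ h
    obtain ⟨k, hk⟩ := hG.exists_linear_apply_eq_zpow_mul f.2
    obtain ⟨l, hl⟩ := hG.exists_linear_apply_eq_zpow_mul g.2
    simp only [MonoidHom.comp_apply, Subgroup.coe_subtype, linearHom_apply, hk, hl, mul_one] at h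
    ext v
    simp [hk, hl, h]
  have himage : (fun L : ℂ ≃ₗ[ℝ] ℂ => L 1) '' (linearHom.comp G.subtype).range ⊆
      (Polynomial.nthRoots n (1 : ℂ)).toFinset := by
    rintro _ ⟨_, ⟨f, rfl⟩, rfl⟩
    obtain ⟨k, hk⟩ := hG.exists_linear_apply_eq_zpow_mul f.2
    simp only [MonoidHom.comp_apply, Subgroup.coe_subtype, linearHom_apply, hk, mul_one,
      Finset.mem_coe, Multiset.mem_toFinset, Polynomial.mem_nthRoots (Nat.pos_of_ne_zero hn)]
    rw [← zpow_natCast, ← zpow_mul, mul_comm, zpow_mul, zpow_natCast, hζ, one_zpow]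
  exact (Set.Finite.of_finite_image ((Finset.finite_toSet _).subset himage) hinj).to_subtype

theorem finiteIndex_range_translationHom (hG : IsRotationTranslationGroup ζ Λ G) {n : ℕ}
    (hn : n ≠ 0) (hζ : ζ ^ n = 1) : (translationHom hG.constVAdd_mem_iff).range.FiniteIndex := by
  rw [range_translationHom]
  have := hG.finite_range_linearHom hn hζ
  infer_instance

theorem comap_translationHom_ne_bot (hG : IsRotationTranslationGroup ζ Λ G) (hΛ : Λ ≠ ⊥)
    {N : Subgroup G} (hN : N.Normal) (hne : N ≠ ⊥) :
    N.comap (translationHom hG.constVAdd_mem_iff) ≠ ⊥ := by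
  obtain ⟨g, hg1⟩ := N.ne_bot_iff_exists_ne_one.1 hne
  obtain ⟨k, hk⟩ := hG.exists_linear_apply_eq_zpow_mul g.1.2
  by_cases hζk : ζ ^ k = 1
  · have hker : g.1 ∈ (linearHom.comp G.subtype).ker :=
      LinearEquiv.ext fun v => by simp [hk, hζk]
    rw [← range_translationHom hG.constVAdd_mem_iff] at hker
    obtain ⟨μ, hμ⟩ := hker
    refine Subgroup.ne_bot_iff_exists_ne_one.2 ⟨⟨μ, Subgroup.mem_comap.2 (hμ ▸ g.2)⟩, fun h => ?_⟩
    have hμ1 : μ = 1 := congrArg Subtype.val h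
    exact hg1 (Subtype.ext (by rw [← hμ, hμ1, map_one]; rfl))
  · obtain ⟨a, ha0⟩ := Λ.ne_bot_iff_exists_ne_zero.1 hΛ
    exact comap_translationHom_ne_bot_of_linear_apply_ne _ hN g.2 a.2 (by
      rw [hk, Ne, mul_eq_right₀ fun h => ha0 (Subtype.ext h)]; exact hζk)

theorem finiteIndex_comap_translationHom (hG : IsRotationTranslationGroup ζ Λ G) {a b : ℂ}
    (hΛ : Λ = AddSubgroup.closure {a, b}) (hζ : ζ.im ≠ 0) {N : Subgroup G} (hN : N.Normal)
    (hbot : N.comap (translationHom hG.constVAdd_mem_iff) ≠ ⊥) :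
    (N.comap (translationHom hG.constVAdd_mem_iff)).FiniteIndex := by
  set M := Subgroup.toAddSubgroup' (N.comap (translationHom hG.constVAdd_mem_iff))
  obtain ⟨⟨ν, hνM⟩, hν0⟩ := M.ne_bot_iff_exists_ne_zero.1 (by simpa [M] using hbot)
  obtain ⟨r, hrG, hr⟩ := hG.exists_mem_linear_apply_eq_mul fun h => hζ (by simp [h])
  have hrνM : (⟨r.linear ν, linear_apply_mem hG.constVAdd_mem_iff hrG ν.2⟩ : Λ) ∈ M := by
    have := hN.conj_mem _ hνM ⟨r, hrG⟩
    rwa [conj_translationHom] at this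
  have hli : LinearIndependent ℤ ![(⟨ν, hνM⟩ : M), ⟨_, hrνM⟩] := by
    refine LinearIndependent.of_comp (Λ.subtype.comp M.subtype).toIntLinearMap ?_
    have hcomp : (Λ.subtype.comp M.subtype).toIntLinearMap ∘ ![(⟨ν, hνM⟩ : M), ⟨_, hrνM⟩] =
        ![(ν : ℂ), ζ * ν] := by
      ext i; fin_cases i <;> simp [hr]
    rw [hcomp]
    exact Complex.linearIndependent_int_pair_mul (fun h => hν0 (by ext; simpa using h)) hζ
  have : M.FiniteIndex := by
    subst hΛ
    refine M.finiteIndex_of_rank_le ((AddSubgroup.rank_closure_pair_le a b).trans ?_)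
    simpa using hli.cardinal_le_rank
  exact ⟨Subgroup.index_toAddSubgroup (H := N.comap (translationHom hG.constVAdd_mem_iff)) ▸
    this.index_ne_zero⟩

end IsRotationTranslationGroup

theorem vanishing_cycles_stmt0_general
    (n : ℕ) (hn : n = 3 ∨ n = 4 ∨ n = 6)
    (Λ : AddSubgroup ℂ) (a b : ℂ)
    (hab : LinearIndependent ℝ ![a, b])
    (hΛ : Λ = AddSubgroup.closure {a, b})
    (G : Subgroup (ℂ ≃ᵃ[ℝ] ℂ))
    (hG : ∀ f : ℂ ≃ᵃ[ℝ] ℂ, f ∈ G ↔ ∃ (k : ℤ) (lam : ℂ), lam ∈ Λ ∧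
      ∀ z : ℂ, f z = Complex.exp (2 * Real.pi * Complex.I / n) ^ k * z + lam)
    (N : Subgroup G) (hN : N.Normal) (hne : N ≠ ⊥) :
    N.FiniteIndex := by
  have hrot : IsRotationTranslationGroup _ Λ G := hG
  have hζ : Complex.exp (2 * Real.pi * Complex.I / n) ^ n = 1 :=
    (Complex.isPrimitiveRoot_exp n (by omega)).pow_eq_one
  have ha : a ∈ Λ := hΛ ▸ AddSubgroup.subset_closure (by simp)
  have hΛ0 : Λ ≠ ⊥ := fun h => hab.ne_zero 0 (by simpa [h] using ha)
  have := hrot.finiteIndex_range_translationHom (by omega) hζ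
  have := hrot.finiteIndex_comap_translationHom hΛ
    (Complex.im_exp_two_pi_mul_I_div_ne_zero (by omega)) hN
    (hrot.comap_translationHom_ne_bot hΛ0 hN hne)
  exact Subgroup.finiteIndex_of_comap (translationHom hrot.constVAdd_mem_iff) N

/-- For `n ∈ {3,4,6}`, in the group `Gₙ = ℤ² ⋊ ℤₙ`, realized as the group of affine
transformations `z ↦ ζᵏ z + λ` of `ℂ` with `ζ = exp(2πi/n)` and `λ` in a `ζ`-invariant
lattice `Λ`, every nontrivial normal subgroup has finite index. -/
theorem vanishing_cycles_stmt0
    (n : ℕ) (hn : n = 3 ∨ n = 4 ∨ n = 6)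
    (Λ : AddSubgroup ℂ) (a b : ℂ)
    (hab : LinearIndependent ℝ ![a, b])
    (hΛ : Λ = AddSubgroup.closure {a, b})
    (hinv : ∀ lam ∈ Λ, Complex.exp (2 * Real.pi * Complex.I / n) * lam ∈ Λ)
    (G : Subgroup (ℂ ≃ᵃ[ℝ] ℂ))
    (hG : ∀ f : ℂ ≃ᵃ[ℝ] ℂ, f ∈ G ↔ ∃ (k : ℤ) (lam : ℂ), lam ∈ Λ ∧
      ∀ z : ℂ, f z = Complex.exp (2 * Real.pi * Complex.I / n) ^ k * z + lam)
    (N : Subgroup G) (hN : N.Normal) (hne : N ≠ ⊥) :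
    N.FiniteIndex :=
  vanishing_cycles_stmt0_general n hn Λ a b hab hΛ G hG N hN hne
end

section
/- In the group G₂ = ℤ² ⋊ ℤ₂ (with ℤ₂ acting by −1), every nontrivial normal subgroup that contains a nontrivial rotation (an element of the form z ↦ −z + λ) has finite index; consequently every nontrivial normal subgroup of infinite index is generated by a single translation. -/
/-!
If a normal subgroup `N` contains a rotation `ρ`, then for every translation `t` by `μ ∈ Λ` the
element `t ρ t⁻¹ ρ ∈ N` is the translation by `2μ`. Once `N` contains the translations by `kΛ`,
`k ≠ 0`, every element of `G₂` is congruent modulo `N` to one of the finitely many maps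
`z ↦ ±z + (i a + j b)`, `0 ≤ i, j < |k|`. Hence a normal subgroup `N` of infinite index consists
of translations, and its group `S ≤ Λ` of translation vectors contains no `kΛ`. Writing `S` as
the image of a subgroup `H ≤ ℤ²`, any two vectors `v, w ∈ H` have determinant zero, since
otherwise `(det v w) ℤ² ≤ H`; so `H` embeds into `ℤ` and is cyclic, and so are `S` and `N`.
-/

open AffineEquiv

namespace AddSubgroup

theorem isAddCyclic_of_det_eq_zero (H : AddSubgroup (ℤ × ℤ))
    (hdet : ∀ v ∈ H, ∀ w ∈ H, v.1 * w.2 = v.2 * w.1) : IsAddCyclic H := by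
  by_cases hH : H = ⊥
  · subst hH
    infer_instance
  obtain ⟨⟨w, hw⟩, hw0⟩ := ne_bot_iff_exists_ne_zero.1 hH
  have hgcd : (w.1.gcd w.2 : ℤ) ≠ 0 := by
    rw [Nat.cast_ne_zero, Ne, Int.gcd_eq_zero_iff]
    exact fun h => hw0 (Subtype.ext (Prod.ext h.1 h.2))
  -- on the line through `w`, pairing with a Bézout vector of `w` is injective
  let ψ : H →+ ℤ :=
    ((AddMonoidHom.mulRight (Int.gcdA w.1 w.2)).coprod
      (AddMonoidHom.mulRight (Int.gcdB w.1 w.2))).comp H.subtype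
  refine isAddCyclic_of_injective ψ ((injective_iff_map_eq_zero ψ).2 fun ⟨v, hv⟩ hψ => ?_)
  have hψ' : v.1 * Int.gcdA w.1 w.2 + v.2 * Int.gcdB w.1 w.2 = 0 := hψ
  have hvw := hdet v hv w hw
  have hbez := Int.gcd_eq_gcd_ab w.1 w.2
  refine Subtype.ext (Prod.ext ?_ ?_)
  · refine (mul_eq_zero.1 (?_ : v.1 * (w.1.gcd w.2 : ℤ) = 0)).resolve_right hgcd
    linear_combination v.1 * hbez + w.1 * hψ' + Int.gcdB w.1 w.2 * hvw
  · refine (mul_eq_zero.1 (?_ : v.2 * (w.1.gcd w.2 : ℤ) = 0)).resolve_right hgcd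
    linear_combination v.2 * hbez + w.2 * hψ' - Int.gcdA w.1 w.2 * hvw

theorem isAddCyclic_of_pair_mem_imp_eq_zero (H : AddSubgroup (ℤ × ℤ))
    (h : ∀ d : ℤ, (d, 0) ∈ H → (0, d) ∈ H → d = 0) : IsAddCyclic H := by
  refine isAddCyclic_of_det_eq_zero H fun v hv w hw => sub_eq_zero.1 (h _ ?_ ?_)
  · convert sub_mem (zsmul_mem hv w.2) (zsmul_mem hw v.2) using 1
    ext <;> simp <;> ring
  · convert sub_mem (zsmul_mem hw v.1) (zsmul_mem hv w.1) using 1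
    ext <;> simp <;> ring

theorem exists_eq_zmultiples_of_le_closure_pair {M : Type*} [AddCommGroup M] {a b : M}
    {S : AddSubgroup M} (hS : S ≤ closure {a, b})
    (h : ∀ d : ℤ, d • a ∈ S → d • b ∈ S → d = 0) : ∃ c, S = zmultiples c := by
  let φ : ℤ × ℤ →+ M := (zmultiplesHom M a).coprod (zmultiplesHom M b)
  have hφ : S ≤ φ.range := fun x hx => by
    obtain ⟨m, n, hmn⟩ := mem_closure_pair.1 (hS hx)
    exact ⟨(m, n), hmn⟩
  have : IsAddCyclic (S.comap φ) :=
    isAddCyclic_of_pair_mem_imp_eq_zero _ fun d ha hb =>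
      h d (by simpa [φ] using ha) (by simpa [φ] using hb)
  obtain ⟨v, hv⟩ := ((S.comap φ).isAddCyclic_iff_exists_zmultiples_eq_top).1 this
  exact ⟨φ v, by rw [← φ.map_zmultiples, hv, map_comap_eq_self hφ]⟩

end AddSubgroup

namespace AffineEquiv

variable {k V P : Type*} [Ring k] [AddCommGroup V] [Module k V] [AddTorsor V P]

def translationVectors (H : Subgroup (P ≃ᵃ[k] P)) : AddSubgroup V :=
  Subgroup.toAddSubgroup' (H.comap (constVAddHom k P))

theorem mem_translationVectors_map {G : Subgroup (P ≃ᵃ[k] P)} {N : Subgroup G} {v : V} :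
    v ∈ translationVectors (N.map G.subtype) ↔ ∃ g ∈ N, (g : P ≃ᵃ[k] P) = constVAdd k P v := by
  simp [translationVectors]

end AffineEquiv

section LatticeGroup

variable {Λ : AddSubgroup ℂ} {G : Subgroup (ℂ ≃ᵃ[ℝ] ℂ)}
  (hG : ∀ f : ℂ ≃ᵃ[ℝ] ℂ, f ∈ G ↔ ∃ (ε : ℂ) (lam : ℂ), (ε = 1 ∨ ε = -1) ∧ lam ∈ Λ ∧
    ∀ z : ℂ, f z = ε * z + lam)

include hG in
theorem constVAdd_mem_iff {x : ℂ} : constVAdd ℝ ℂ x ∈ G ↔ x ∈ Λ := by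
  refine ⟨fun hx => ?_, fun hx => (hG _).2 ⟨1, x, Or.inl rfl, hx, fun z => by simp [add_comm]⟩⟩
  obtain ⟨ε, lam, -, hlam, hf⟩ := (hG _).1 hx
  rwa [show x = lam by simpa using hf 0]

include hG in
theorem pointReflection_half_mem {x : ℂ} (hx : x ∈ Λ) : pointReflection ℝ (x / 2) ∈ G :=
  (hG _).2 ⟨-1, x, Or.inr rfl, hx, fun z => by
    simp only [coe_pointReflection, Equiv.pointReflection_apply, vsub_eq_sub, vadd_eq_add]
    ring⟩

include hG in
theorem translationVectors_map_le (N : Subgroup G) : translationVectors (N.map G.subtype) ≤ Λ :=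
  fun x hx => by
    obtain ⟨g, -, hg⟩ := mem_translationVectors_map.1 hx
    exact (constVAdd_mem_iff hG).1 (hg ▸ g.2)

theorem mk_eq_mk_of_sub_mem_translationVectors (N : Subgroup G) {g r : G} {ε x y : ℂ}
    (hε : ε = 1 ∨ ε = -1) (hg : ∀ z, (g : ℂ ≃ᵃ[ℝ] ℂ) z = ε * z + x)
    (hr : ∀ z, (r : ℂ ≃ᵃ[ℝ] ℂ) z = ε * z + y)
    (hxy : x - y ∈ translationVectors (N.map G.subtype)) : (g : G ⧸ N) = r := by
  have hεxy : ε * (x - y) ∈ translationVectors (N.map G.subtype) := by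
    rcases hε with rfl | rfl
    · simpa using hxy
    · simpa using neg_mem hxy
  obtain ⟨n, hnN, hn⟩ := mem_translationVectors_map.1 hεxy
  have : g = r * n := Subtype.ext <| AffineEquiv.ext fun z => by
    rw [Subgroup.coe_mul, coe_mul, Function.comp_apply, hn, hg, hr, constVAdd_apply, vadd_eq_add]
    rcases hε with rfl | rfl <;> ring
  rw [this, QuotientGroup.mk_mul_of_mem r hnN]

include hG in
theorem finiteIndex_of_zsmul_mem {a b : ℂ} (hΛ : Λ = AddSubgroup.closure {a, b})
    (N : Subgroup G) {k : ℤ} (hk : k ≠ 0) (ha : k • a ∈ translationVectors (N.map G.subtype))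
    (hb : k • b ∈ translationVectors (N.map G.subtype)) : N.FiniteIndex := by
  set T := translationVectors (N.map G.subtype)
  have hkΛ : Λ ≤ T.comap (zsmulAddGroupHom k) := by
    rw [hΛ, AddSubgroup.closure_le, Set.insert_subset_iff, Set.singleton_subset_iff]
    exact ⟨ha, hb⟩
  let lat : ℤ × ℤ → ℂ := fun p => p.1 • a + p.2 • b
  have hlat (p : ℤ × ℤ) : lat p ∈ Λ := hΛ ▸ AddSubgroup.mem_closure_pair.2 ⟨p.1, p.2, rfl⟩
  let tr (p : ℤ × ℤ) : G ⧸ N := (⟨_, (constVAdd_mem_iff hG).2 (hlat p)⟩ : G)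
  let rot (p : ℤ × ℤ) : G ⧸ N := (⟨_, pointReflection_half_mem hG (hlat p)⟩ : G)
  let B : Set (ℤ × ℤ) := Set.Ico 0 |k| ×ˢ Set.Ico 0 |k|
  have hcover (q : G ⧸ N) : q ∈ tr '' B ∪ rot '' B := by
    induction q using QuotientGroup.induction_on with | H g => ?_
    obtain ⟨ε, x, hε, hx, hg⟩ := (hG g).1 g.2
    obtain ⟨m, n, rfl⟩ := AddSubgroup.mem_closure_pair.1 (hΛ ▸ hx)
    have hB : (m % k, n % k) ∈ B := by
      simp [B, Int.emod_nonneg _ hk, Int.emod_lt_abs _ hk]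
    have hsub : m • a + n • b - lat (m % k, n % k) ∈ T := by
      have hdiff : m • a + n • b - lat (m % k, n % k) = k • lat (m / k, n / k) := by
        dsimp only [lat]
        rw [smul_add, smul_smul, smul_smul, Int.mul_ediv_self, Int.mul_ediv_self, sub_smul,
          sub_smul]
        abel
      rw [hdiff]
      exact hkΛ (hlat _)
    rcases hε with rfl | rfl
    · refine .inl ⟨_, hB, (mk_eq_mk_of_sub_mem_translationVectors N (.inl rfl) hg ?_ hsub).symm⟩
      simp [add_comm]
    · refine .inr ⟨_, hB, (mk_eq_mk_of_sub_mem_translationVectors N (.inr rfl) hg ?_ hsub).symm⟩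
      intro z
      simp only [coe_pointReflection, Equiv.pointReflection_apply, vsub_eq_sub, vadd_eq_add]
      ring
  have : Finite (G ⧸ N) := Set.finite_univ_iff.1 <|
    (((Set.finite_Ico _ _).prod (Set.finite_Ico _ _)).image tr |>.union
      (((Set.finite_Ico _ _).prod (Set.finite_Ico _ _)).image rot)).subset fun q _ => hcover q
  exact Subgroup.finiteIndex_of_finite_quotient

include hG in
theorem two_zsmul_mem_translationVectors_of_rotation_mem {N : Subgroup G} (hN : N.Normal)
    {ρ : G} (hρN : ρ ∈ N) {x : ℂ} (hρ : ∀ z, (ρ : ℂ ≃ᵃ[ℝ] ℂ) z = -z + x) {μ : ℂ} (hμ : μ ∈ Λ) :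
    (2 : ℤ) • μ ∈ translationVectors (N.map G.subtype) := by
  let t : G := ⟨constVAdd ℝ ℂ μ, (constVAdd_mem_iff hG).2 hμ⟩
  refine mem_translationVectors_map.2 ⟨t * ρ * t⁻¹ * ρ, mul_mem (hN.conj_mem ρ hρN t) hρN, ?_⟩
  ext z
  simp only [t, Subgroup.coe_mul, InvMemClass.coe_inv, inv_def, constVAdd_symm, coe_mul,
    Function.comp_apply, hρ, constVAdd_apply, vadd_eq_add, zsmul_eq_mul]
  ring

include hG in
theorem finiteIndex_of_rotation_mem {a b : ℂ} (hΛ : Λ = AddSubgroup.closure {a, b})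
    {N : Subgroup G} (hN : N.Normal) {ρ : G} (hρN : ρ ∈ N) {x : ℂ}
    (hρ : ∀ z, (ρ : ℂ ≃ᵃ[ℝ] ℂ) z = -z + x) : N.FiniteIndex :=
  have hmem (μ : ℂ) (hμ : μ ∈ Λ) := two_zsmul_mem_translationVectors_of_rotation_mem hG hN hρN hρ hμ
  finiteIndex_of_zsmul_mem hG hΛ N two_ne_zero (hmem a (hΛ ▸ AddSubgroup.subset_closure (by simp)))
    (hmem b (hΛ ▸ AddSubgroup.subset_closure (by simp)))

include hG in
theorem exists_eq_constVAdd_of_not_finiteIndex {a b : ℂ} (hΛ : Λ = AddSubgroup.closure {a, b})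
    {N : Subgroup G} (hN : N.Normal) (hinf : ¬ N.FiniteIndex) {g : G} (hg : g ∈ N) :
    ∃ x, (g : ℂ ≃ᵃ[ℝ] ℂ) = constVAdd ℝ ℂ x := by
  obtain ⟨ε, x, hε | hε, -, hgx⟩ := (hG g).1 g.2
  · exact ⟨x, AffineEquiv.ext fun z => by simp [hgx, hε, add_comm]⟩
  · exact (hinf (finiteIndex_of_rotation_mem hG hΛ hN hg (x := x) fun z => by simp [hgx, hε])).elim

end LatticeGroup

theorem vanishing_cycles_stmt1_general
    (Λ : AddSubgroup ℂ) (a b : ℂ)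
    (hΛ : Λ = AddSubgroup.closure {a, b})
    (G : Subgroup (ℂ ≃ᵃ[ℝ] ℂ))
    (hG : ∀ f : ℂ ≃ᵃ[ℝ] ℂ, f ∈ G ↔ ∃ (ε : ℂ) (lam : ℂ), (ε = 1 ∨ ε = -1) ∧ lam ∈ Λ ∧
      ∀ z : ℂ, f z = ε * z + lam)
    (N : Subgroup G) (hN : N.Normal) :
    ((∃ ρ : G, ρ ∈ N ∧ ∃ lam ∈ Λ, ∀ z : ℂ, (ρ : ℂ ≃ᵃ[ℝ] ℂ) z = -z + lam) →
        N.FiniteIndex) ∧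
    (¬ N.FiniteIndex →
      ∃ g : G, (∃ lam ∈ Λ, ∀ z : ℂ, (g : ℂ ≃ᵃ[ℝ] ℂ) z = z + lam) ∧
        N = Subgroup.zpowers g) := by
  refine ⟨fun ⟨ρ, hρN, x, _, hρ⟩ => finiteIndex_of_rotation_mem hG hΛ hN hρN hρ, fun hinf => ?_⟩
  set T := translationVectors (N.map G.subtype)
  obtain ⟨c, hc⟩ : ∃ c, T = AddSubgroup.zmultiples c :=
    AddSubgroup.exists_eq_zmultiples_of_le_closure_pair (hΛ ▸ translationVectors_map_le hG N)
      fun d ha hb => by_contra fun hd => hinf (finiteIndex_of_zsmul_mem hG hΛ N hd ha hb)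
  have hcT : c ∈ T := hc ▸ AddSubgroup.mem_zmultiples c
  obtain ⟨g, hgN, hg⟩ := mem_translationVectors_map.1 hcT
  refine ⟨g, ⟨c, translationVectors_map_le hG N hcT, fun z => by simp [hg, add_comm]⟩,
    le_antisymm (fun h hh => ?_) (Subgroup.zpowers_le.2 hgN)⟩
  obtain ⟨x, hx⟩ := exists_eq_constVAdd_of_not_finiteIndex hG hΛ hN hinf hh
  have hxT : x ∈ T := mem_translationVectors_map.2 ⟨h, hh, hx⟩
  obtain ⟨t, rfl⟩ := AddSubgroup.mem_zmultiples_iff.1 (hc ▸ hxT)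
  exact ⟨t, Subtype.ext (by rw [SubgroupClass.coe_zpow, hg, hx, constVAdd_zsmul])⟩

/-- In `G₂ = ℤ² ⋊ ℤ₂` (affine maps `z ↦ ±z + λ`, `λ` in a lattice `Λ ⊂ ℂ`, with `ℤ₂`
acting by `−1`), every nontrivial normal subgroup containing a nontrivial rotation
(an element `z ↦ −z + λ`) has finite index; consequently every nontrivial normal
subgroup of infinite index is generated by a single translation. -/
theorem vanishing_cycles_stmt1
    (Λ : AddSubgroup ℂ) (a b : ℂ)
    (hab : LinearIndependent ℝ ![a, b])
    (hΛ : Λ = AddSubgroup.closure {a, b})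
    (G : Subgroup (ℂ ≃ᵃ[ℝ] ℂ))
    (hG : ∀ f : ℂ ≃ᵃ[ℝ] ℂ, f ∈ G ↔ ∃ (ε : ℂ) (lam : ℂ), (ε = 1 ∨ ε = -1) ∧ lam ∈ Λ ∧
      ∀ z : ℂ, f z = ε * z + lam)
    (N : Subgroup G) (hN : N.Normal) (hne : N ≠ ⊥) :
    ((∃ ρ : G, ρ ∈ N ∧ ∃ lam ∈ Λ, ∀ z : ℂ, (ρ : ℂ ≃ᵃ[ℝ] ℂ) z = -z + lam) →
        N.FiniteIndex) ∧
    (¬ N.FiniteIndex →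
      ∃ g : G, (∃ lam ∈ Λ, ∀ z : ℂ, (g : ℂ ≃ᵃ[ℝ] ℂ) z = z + lam) ∧
        N = Subgroup.zpowers g) :=
  vanishing_cycles_stmt1_general Λ a b hΛ G hG N hN
end

section
/- For p > 0 let f_p(r) = r^{2p} for 1/2 ≤ r ≤ 1 and f_p(r) = 2 − r^{−2p} for 1 ≤ r ≤ 2. Then for every smooth compactly supported function ψ̃ on (1/2, 2), the limit as p → 0⁺ of (1/(πp))·[∫_{1/2}^{2} f_p(r)·(r ψ̃''(r) + ψ̃'(r)) dr] equals 0. -/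
open MeasureTheory intervalIntegral Filter

lemma measurable_rpow_const_aux (c : ℝ) : Measurable fun x : ℝ => x ^ c := by
  have hrw : (fun x : ℝ => x ^ c) = fun x =>
      if x = 0 then (if c = 0 then 1 else 0)
      else Real.exp (Real.log x * c) * (if x < 0 then Real.cos (c * Real.pi) else 1) := by
    funext x
    rcases lt_trichotomy x 0 with h | h | h
    · rw [if_neg (ne_of_lt h), if_pos h, Real.rpow_def_of_neg h, mul_comm c]
    · subst h
      simp only [if_pos rfl]
      by_cases hc : c = 0
      · simp [hc]
      · simp [hc, Real.zero_rpow hc]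
    · rw [if_neg (ne_of_gt h), if_neg (not_lt.mpr h.le), mul_one, Real.rpow_def_of_pos h]
  rw [hrw]
  refine Measurable.ite (measurableSet_eq) measurable_const ?_
  exact ((Real.measurable_log.mul measurable_const).exp).mul
    (Measurable.ite (measurableSet_lt measurable_id measurable_const)
      measurable_const measurable_const)

lemma exp_slope_tendsto (c : ℝ) :
    Tendsto (fun p : ℝ => p⁻¹ * (Real.exp (c * p) - 1)) (nhdsWithin 0 (Set.Ioi 0)) (nhds c) := by
  have h0 : HasDerivAt (fun p : ℝ => c * p) c 0 := by
    simpa using (hasDerivAt_id (0:ℝ)).const_mul c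
  have h : HasDerivAt (fun p : ℝ => Real.exp (c * p)) c 0 := by
    simpa using h0.exp
  have hs := hasDerivAt_iff_tendsto_slope.mp h
  have hmono : Set.Ioi (0:ℝ) ⊆ {(0:ℝ)}ᶜ := fun x hx => ne_of_gt hx
  refine Tendsto.congr (fun p => ?_) (hs.mono_left (nhdsWithin_mono _ hmono))
  simp [slope_def_field, div_eq_inv_mul]

/-- For `p > 0` let `f_p(r) = r^{2p}` for `r ≤ 1` and `f_p(r) = 2 − r^{−2p}` for `r ≥ 1`.
For every smooth compactly supported `ψ̃` on `(1/2, 2)`,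
`(1/(πp)) ∫_{1/2}^{2} f_p(r)(r ψ̃''(r) + ψ̃'(r)) dr → 0` as `p → 0⁺`. -/
theorem vanishing_cycles_stmt6 (ψ : ℝ → ℝ) (hψ : ContDiff ℝ (⊤ : ℕ∞) ψ)
    (hsupp : HasCompactSupport ψ) (hsub : tsupport ψ ⊆ Set.Ioo (1/2 : ℝ) 2) :
    Filter.Tendsto (fun p : ℝ =>
        (1 / (Real.pi * p)) * ∫ r in (1/2 : ℝ)..2,
          (if r ≤ 1 then r ^ (2 * p) else 2 - r ^ (-(2 * p))) *
            (r * deriv (deriv ψ) r + deriv ψ r))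
      (nhdsWithin 0 (Set.Ioi 0)) (nhds 0) := by
  have hψ0 : ContDiff ℝ (⊤:ℕ∞) ψ := hψ.of_le (by simp)
  have hψ1 : ContDiff ℝ (⊤:ℕ∞) (deriv ψ) := (contDiff_infty_iff_deriv.1 hψ0).2
  have hd1 : Differentiable ℝ (deriv ψ) := hψ1.differentiable (by simp)
  have hψ2c : Continuous (deriv (deriv ψ)) := (contDiff_infty_iff_deriv.1 hψ1).2.continuous
  have hd0 : Differentiable ℝ ψ := hψ0.differentiable (by simp)
  set G : ℝ → ℝ := fun r => r * deriv (deriv ψ) r + deriv ψ r with hG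
  have hGc : Continuous G := (continuous_id.mul hψ2c).add hψ1.continuous
  have hmem : ∀ x : ℝ, x ∉ Set.Ioo (1/2:ℝ) 2 → ψ x = 0 ∧ deriv ψ x = 0 := by
    intro x hx
    have hxs : x ∉ tsupport ψ := fun h => hx (hsub h)
    exact ⟨image_eq_zero_of_notMem_tsupport hxs,
      Function.notMem_support.mp (fun h => hxs (support_deriv_subset h))⟩
  obtain ⟨hψhalf, hψ'half⟩ := hmem (1/2) (by norm_num)
  obtain ⟨hψtwo, hψ'two⟩ := hmem 2 (by norm_num)
  obtain ⟨hψhalf', hψ'half'⟩ := hmem 2⁻¹ (by norm_num)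
  have hle : (1/2:ℝ) ≤ 2 := by norm_num
  -- derivative of r * ψ'
  have hDG : ∀ r : ℝ, HasDerivAt (fun r => r * deriv ψ r) (G r) r := by
    intro r
    have h := (hasDerivAt_id r).mul ((hd1 r).hasDerivAt)
    have h2 : G r = 1 * deriv ψ r + r * deriv (deriv ψ) r := by simp only [hG]; ring
    rw [h2]; exact h
  have hIG : (∫ r in (1/2:ℝ)..2, G r) = 0 := by
    rw [integral_eq_sub_of_hasDerivAt (fun x _ => hDG x) (hGc.intervalIntegrable _ _)]
    simp [hψ'two, hψ'half, hψ'half']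
  -- log antiderivative
  have hDF : ∀ r ∈ Set.uIcc (1/2:ℝ) 2,
      HasDerivAt (fun r => 2*Real.log r * (r * deriv ψ r) - 2 * ψ r) (2*Real.log r * G r) r := by
    intro r hr
    rw [Set.uIcc_of_le hle] at hr
    have hr0 : (0:ℝ) < r := by linarith [hr.1]
    have hlog : HasDerivAt (fun r : ℝ => 2 * Real.log r) (2 * r⁻¹) r :=
      (Real.hasDerivAt_log (ne_of_gt hr0)).const_mul 2
    have hmul := hlog.mul (hDG r)
    have hsub := hmul.sub ((hd0 r).hasDerivAt.const_mul 2)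
    refine hsub.congr_deriv ?_
    field_simp
    ring
  have hILG : (∫ r in (1/2:ℝ)..2, 2*Real.log r * G r) = 0 := by
    have hcont : ContinuousOn (fun r => 2*Real.log r * G r) (Set.uIcc (1/2:ℝ) 2) := by
      apply ContinuousOn.mul
      · refine (Real.continuousOn_log.mono ?_).const_smul 2 |>.congr (fun x _ => by simp [smul_eq_mul])
        rw [Set.uIcc_of_le hle]
        intro x hx
        simp only [Set.mem_compl_iff, Set.mem_singleton_iff]
        intro h; rw [h] at hx; exact absurd hx.1 (by norm_num)
      · exact hGc.continuousOn
    rw [integral_eq_sub_of_hasDerivAt hDF (hcont.intervalIntegrable)]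
    simp [hψ'two, hψ'half', hψtwo, hψhalf']
  -- set-integral versions
  have hIGset : (∫ r in Set.Ioc (1/2:ℝ) 2, G r) = 0 := by
    rw [← intervalIntegral.integral_of_le hle]; exact hIG
  have hILGset : (∫ r in Set.Ioc (1/2:ℝ) 2, 2*Real.log r * G r) = 0 := by
    rw [← intervalIntegral.integral_of_le hle]; exact hILG
  have hGint : IntegrableOn G (Set.Ioc (1/2:ℝ) 2) :=
    (hGc.integrableOn_Icc).mono_set Set.Ioc_subset_Icc_self
  have hfmeas : ∀ p : ℝ,
      Measurable fun r : ℝ => (if r ≤ 1 then r^(2*p) else 2 - r^(-(2*p))) := by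
    intro p
    apply Measurable.ite (measurableSet_le measurable_id measurable_const)
    · exact measurable_rpow_const_aux _
    · exact measurable_const.sub (measurable_rpow_const_aux _)
  have hlog2 : (0:ℝ) ≤ Real.log 2 := Real.log_nonneg (by norm_num)
  have hfbound : ∀ p : ℝ, 0 < p → ∀ r ∈ Set.Ioc (1/2:ℝ) 2,
      |(if r ≤ 1 then r^(2*p) else 2 - r^(-(2*p))) - 1| ≤ p * (2 * Real.log 2) := by
    intro p hp r hr
    have hr0 : (0:ℝ) < r := lt_trans (by norm_num) hr.1
    by_cases h : r ≤ 1
    · rw [if_pos h]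
      have hrw : r ^ (2*p) = Real.exp ((2*p) * Real.log r) := by
        rw [Real.rpow_def_of_pos hr0]; ring_nf
      have hub : r ^ (2*p) ≤ 1 := Real.rpow_le_one hr0.le h (by positivity)
      have hlb : (2*p) * Real.log r + 1 ≤ r ^ (2*p) := by
        rw [hrw]; exact Real.add_one_le_exp _
      have hlogr : -Real.log 2 ≤ Real.log r := by
        have h1 : Real.log (1/2) ≤ Real.log r := Real.log_le_log (by norm_num) hr.1.le
        rw [one_div, Real.log_inv] at h1; exact h1
      have hx : -(2*p) * Real.log 2 ≤ (2*p) * Real.log r := by nlinarith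
      rw [abs_le]; constructor <;> nlinarith
    · rw [if_neg h]
      push_neg at h
      have hrw : r ^ (-(2*p)) = Real.exp (-((2*p) * Real.log r)) := by
        rw [Real.rpow_def_of_pos hr0]; ring_nf
      have hub : r ^ (-(2*p)) ≤ 1 :=
        Real.rpow_le_one_of_one_le_of_nonpos h.le (by nlinarith)
      have hlb : 1 - (2*p)*Real.log r ≤ r ^ (-(2*p)) := by
        rw [hrw]
        have := Real.add_one_le_exp (-((2*p)*Real.log r))
        linarith
      have hlogr : Real.log r ≤ Real.log 2 := Real.log_le_log hr0 hr.2
      have hlogrpos : 0 ≤ Real.log r := Real.log_nonneg h.le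
      have hx : (2*p) * Real.log r ≤ (2*p) * Real.log 2 := by nlinarith
      rw [abs_le]; constructor <;> nlinarith
  have hfpGint : ∀ p : ℝ, 0 < p → IntegrableOn
      (fun r => ((if r ≤ 1 then r^(2*p) else 2 - r^(-(2*p))) - 1) * G r)
      (Set.Ioc (1/2:ℝ) 2) := by
    intro p hp
    refine Integrable.mono' ((hGint.abs).const_mul (p*(2*Real.log 2)))
      ((((hfmeas p).sub measurable_const).mul hGc.measurable).aestronglyMeasurable) ?_
    filter_upwards [ae_restrict_mem measurableSet_Ioc] with r hr
    rw [Real.norm_eq_abs, abs_mul]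
    exact mul_le_mul_of_nonneg_right (hfbound p hp r hr) (abs_nonneg _)
  -- eventual rewriting
  have heq : ∀ᶠ p in nhdsWithin (0:ℝ) (Set.Ioi 0),
      (1 / (Real.pi * p)) * (∫ r in (1/2:ℝ)..2,
        (if r ≤ 1 then r ^ (2 * p) else 2 - r ^ (-(2 * p))) * G r)
      = (1/Real.pi) * ∫ r in Set.Ioc (1/2:ℝ) 2,
          (p⁻¹ * ((if r ≤ 1 then r ^ (2 * p) else 2 - r ^ (-(2 * p))) - 1)) * G r := by
    filter_upwards [self_mem_nhdsWithin] with p hp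
    rw [intervalIntegral.integral_of_le hle]
    have hsplit : (∫ r in Set.Ioc (1/2:ℝ) 2,
        (if r ≤ 1 then r ^ (2 * p) else 2 - r ^ (-(2 * p))) * G r)
        = (∫ r in Set.Ioc (1/2:ℝ) 2,
            ((if r ≤ 1 then r ^ (2 * p) else 2 - r ^ (-(2 * p))) - 1) * G r)
          + ∫ r in Set.Ioc (1/2:ℝ) 2, G r := by
      rw [← integral_add (hfpGint p hp) hGint]
      congr 1; ext r; ring
    rw [hsplit, hIGset, add_zero]
    simp only [mul_assoc]
    rw [MeasureTheory.integral_const_mul]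
    rw [← mul_assoc]
    congr 1
    rw [one_div, one_div, mul_inv]
  -- dominated convergence
  have hlim : Tendsto (fun p : ℝ => ∫ r in Set.Ioc (1/2:ℝ) 2,
      (p⁻¹ * ((if r ≤ 1 then r ^ (2 * p) else 2 - r ^ (-(2 * p))) - 1)) * G r)
      (nhdsWithin (0:ℝ) (Set.Ioi 0)) (nhds 0) := by
    have hdct : Tendsto (fun p : ℝ => ∫ r in Set.Ioc (1/2:ℝ) 2,
        (p⁻¹ * ((if r ≤ 1 then r ^ (2 * p) else 2 - r ^ (-(2 * p))) - 1)) * G r)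
        (nhdsWithin (0:ℝ) (Set.Ioi 0))
        (nhds (∫ r in Set.Ioc (1/2:ℝ) 2, 2*Real.log r * G r)) := by
      apply MeasureTheory.tendsto_integral_filter_of_dominated_convergence
        (fun r => (2*Real.log 2) * |G r|)
      · refine Filter.Eventually.of_forall fun p => ?_
        exact ((((hfmeas p).sub measurable_const).const_mul _).mul
          hGc.measurable).aestronglyMeasurable
      · filter_upwards [self_mem_nhdsWithin] with p hp
        filter_upwards [ae_restrict_mem measurableSet_Ioc] with r hr
        rw [Real.norm_eq_abs, abs_mul, abs_mul, abs_inv, abs_of_pos hp]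
        refine mul_le_mul_of_nonneg_right ?_ (abs_nonneg _)
        have hb := hfbound p hp r hr
        have h1 : p⁻¹ * |(if r ≤ 1 then r^(2*p) else 2 - r^(-(2*p))) - 1|
            ≤ p⁻¹ * (p * (2 * Real.log 2)) :=
          mul_le_mul_of_nonneg_left hb (inv_nonneg.mpr hp.le)
        rwa [← mul_assoc, inv_mul_cancel₀ (ne_of_gt hp), one_mul] at h1
      · exact (hGint.abs).const_mul _
      · filter_upwards [ae_restrict_mem measurableSet_Ioc] with r hr
        have hr0 : (0:ℝ) < r := lt_trans (by norm_num) hr.1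
        refine Tendsto.mul_const (G r) ?_
        by_cases h : r ≤ 1
        · simp only [if_pos h]
          refine (exp_slope_tendsto (2 * Real.log r)).congr fun p => ?_
          rw [Real.rpow_def_of_pos hr0]
          have : Real.log r * (2*p) = 2 * Real.log r * p := by ring
          rw [this]
        · simp only [if_neg h]
          have key := (exp_slope_tendsto (-(2 * Real.log r))).neg
          rw [neg_neg] at key
          refine key.congr fun p => ?_
          rw [Real.rpow_def_of_pos hr0]
          have : Real.log r * -(2*p) = -(2 * Real.log r) * p := by ring
          rw [this]
          ring
    rwa [hILGset] at hdct
  have hfin := hlim.const_mul (1/Real.pi)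
  rw [mul_zero] at hfin
  exact hfin.congr' (Filter.EventuallyEq.symm heq)
end
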